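/- arXiv:2402.12988 — 3 statements merged into one kernel-verified Lean document; each statement's English description precedes it below -/
import Mathlib

section
/- For any dual quaternion q = q_s + q_d·ε there exists a unit dual quaternion u and a dual complex number a such that a = u* q u. Moreover Re(q) = Re(a) and |Im(q)| = |Im(a)|, where real parts and magnitudes of imaginary parts are taken componentwise (standard and dual parts). -/
open TrivSqZeroExt

noncomputable section
open Classical

local notation "ℍ" => Quaternion ℝ

/-- Conjugate of a dual quaternion. -/
def dstar (a : DualNumber ℍ) : DualNumber ℍ := inl (star a.fst) + inr (star a.snd)

/-- Imaginary part of a quaternion. -/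
def imQ (x : ℍ) : ℍ := x - (x.re : ℍ)

/-- Imaginary part of a dual quaternion, taken componentwise. -/
def dualIm (p : DualNumber ℍ) : DualNumber ℍ := inl (imQ p.fst) + inr (imQ p.snd)

/-- The magnitude of a dual quaternion, as a dual (real) number. -/
def dmagH (p : DualNumber ℍ) : DualNumber ℝ :=
  if p.fst ≠ 0 then
    inl ‖p.fst‖ + inr ((star p.fst * p.snd + star p.snd * p.fst).re / (2 * ‖p.fst‖))
  else inr ‖p.snd‖

/-!
Conjugation `p ↦ u* p u` by a unit dual quaternion (`u u* = 1`) fixes every dual number with real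
components, as these are central. Since `p + p*` and `p* p` are such dual numbers, conjugation
preserves the real parts of `p` and the dual-number norm of its imaginary part.

To reach a dual complex number, first conjugate by a unit quaternion `u₀` that rotates `Im q_s`
onto the `i`-axis. If `Im q_s ≠ 0`, conjugating further by `1 + ε h` with `h` pure imaginary
changes only the dual part, by the commutator `q_s h - h q_s`, and `h` can be chosen so that this
cancels the `j`, `k` components of the dual part. If `q_s` is real, rotate `q_d` instead.
-/

open Quaternion (normSq normSq_def' normSq_eq_norm_mul_self star_mul_self coe_commutes)

theorem Quaternion.star_mul_self_of_norm_eq_one {u : ℍ} (hu : ‖u‖ = 1) : star u * u = 1 := by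
  rw [star_mul_self, normSq_eq_norm_mul_self, hu, mul_one, Quaternion.coe_one]

theorem Quaternion.star_mul_coe_mul_of_norm_eq_one {u : ℍ} (hu : ‖u‖ = 1) (r : ℝ) :
    star u * r * u = r := by
  rw [mul_assoc, coe_commutes, ← mul_assoc, star_mul_self_of_norm_eq_one hu, one_mul]

theorem Quaternion.exists_ne_zero_star_mul_mul_eq_of_re_eq_zero {v : ℍ} (hv : v.re = 0) :
    ∃ w : ℍ, w ≠ 0 ∧ star w * v * w = normSq w • ((‖v‖ * Complex.I : ℂ) : ℍ) := by
  by_cases hw : ((‖v‖ * Complex.I : ℂ) : ℍ) + v = 0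
  · -- `v = -‖v‖ i`, which the half-turn about the `j`-axis sends to `‖v‖ i`
    have hI : v.imI = -‖v‖ := by
      linarith [show ‖v‖ + v.imI = 0 by simpa using congrArg (fun x : ℍ => x.imI) hw]
    have hJ : v.imJ = 0 := by simpa using congrArg (fun x : ℍ => x.imJ) hw
    have hK : v.imK = 0 := by simpa using congrArg (fun x : ℍ => x.imK) hw
    let j : ℍ := ⟨0, 0, 1, 0⟩
    have hj : j.re = 0 ∧ j.imI = 0 ∧ j.imJ = 1 ∧ j.imK = 0 := ⟨rfl, rfl, rfl, rfl⟩
    refine ⟨j, fun h => one_ne_zero (congrArg (fun x : ℍ => x.imJ) h), ?_⟩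
    ext <;> simp [normSq_def', hj, hv, hI, hJ, hK]
  · -- the half-turn about the bisector of `v` and `‖v‖ i`
    have hs : ‖v‖ ^ 2 = v.imI ^ 2 + v.imJ ^ 2 + v.imK ^ 2 := by
      rw [sq, ← normSq_eq_norm_mul_self, normSq_def', hv]; ring
    refine ⟨_, hw, ?_⟩
    ext <;> simp [normSq_def', hv]
    · ring
    · linear_combination (-(‖v‖ + v.imI)) * hs
    · linear_combination (-v.imJ) * hs
    · linear_combination (-v.imK) * hs

theorem Quaternion.exists_norm_eq_one_star_mul_mul_eq_of_re_eq_zero {v : ℍ} (hv : v.re = 0) :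
    ∃ u : ℍ, ‖u‖ = 1 ∧ star u * v * u = ((‖v‖ * Complex.I : ℂ) : ℍ) := by
  obtain ⟨w, hw₀, hw⟩ := exists_ne_zero_star_mul_mul_eq_of_re_eq_zero hv
  have hnorm : ‖w‖ ≠ 0 := norm_ne_zero_iff.mpr hw₀
  refine ⟨‖w‖⁻¹ • w, by rw [norm_smul, norm_inv, norm_norm, inv_mul_cancel₀ hnorm], ?_⟩
  rw [Quaternion.star_smul, smul_mul_assoc, smul_mul_assoc, mul_smul_comm, smul_smul, hw,
    smul_smul, normSq_eq_norm_mul_self]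
  field_simp
  simp

theorem Quaternion.exists_norm_eq_one_star_mul_mul_eq_coeComplex (x : ℍ) :
    ∃ u : ℍ, ‖u‖ = 1 ∧ star u * x * u = ((⟨x.re, ‖x.im‖⟩ : ℂ) : ℍ) := by
  obtain ⟨u, hu, h⟩ := exists_norm_eq_one_star_mul_mul_eq_of_re_eq_zero x.re_im
  refine ⟨u, hu, ?_⟩
  rw [← x.re_add_im, mul_add, add_mul, star_mul_coe_mul_of_norm_eq_one hu, h]
  ext <;> simp

@[simp] theorem fst_dstar (a : DualNumber ℍ) : (dstar a).fst = star a.fst := by simp [dstar]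

@[simp] theorem snd_dstar (a : DualNumber ℍ) : (dstar a).snd = star a.snd := by simp [dstar]

theorem dstar_mul (a b : DualNumber ℍ) : dstar (a * b) = dstar b * dstar a := by
  ext <;> simp [fst_mul, snd_mul, add_comm]

theorem dstar_dstar (a : DualNumber ℍ) : dstar (dstar a) = a := by ext <;> simp

theorem commute_inl_coe_add_inr_coe (x y : ℝ) (p : DualNumber ℍ) :
    Commute (inl (x : ℍ) + inr (y : ℍ)) p := by
  ext <;> simp [fst_mul, snd_mul, coe_commutes, add_comm]

theorem add_dstar (p : DualNumber ℍ) :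
    p + dstar p = inl ((2 * p.fst.re : ℝ) : ℍ) + inr ((2 * p.snd.re : ℝ) : ℍ) := by
  ext <;> simp [Quaternion.self_add_star']

theorem snd_dstar_mul_self (p : DualNumber ℍ) :
    (dstar p * p).snd = star p.fst * p.snd + star p.snd * p.fst := by
  simp [snd_mul, MulOpposite.smul_eq_mul_unop]

theorem dstar_mul_self (p : DualNumber ℍ) :
    dstar p * p
      = inl ((normSq p.fst : ℝ) : ℍ) + inr ((2 * (star p.fst * p.snd).re : ℝ) : ℍ) := by
  have h : star p.snd * p.fst = star (star p.fst * p.snd) := by rw [star_mul, star_star]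
  ext : 1
  · simp [star_mul_self]
  · rw [snd_dstar_mul_self, h, Quaternion.self_add_star']
    simp

theorem dualIm_eq_sub (p : DualNumber ℍ) :
    dualIm p = p - (inl (p.fst.re : ℍ) + inr (p.snd.re : ℍ)) := by
  ext <;> simp [dualIm, imQ]

theorem mul_dstar_eq_one_iff {u : DualNumber ℍ} :
    u * dstar u = 1 ↔ ‖u.fst‖ = 1 ∧ u.fst * star u.snd + u.snd * star u.fst = 0 := by
  have hnorm : u.fst * star u.fst = 1 ↔ ‖u.fst‖ = 1 := by
    rw [Quaternion.self_mul_star, ← Quaternion.coe_one, Quaternion.coe_inj,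
      normSq_eq_norm_mul_self, mul_self_eq_one_iff, or_iff_left]
    linarith [norm_nonneg u.fst]
  rw [TrivSqZeroExt.ext_iff, ← hnorm]
  simp [snd_mul, MulOpposite.smul_eq_mul_unop]

theorem dstar_mul_eq_one_of_mul_dstar_eq_one {u : DualNumber ℍ} (hu : u * dstar u = 1) :
    dstar u * u = 1 := by
  have hfst : u.fst * star u.fst = 1 := by simpa [fst_mul] using congrArg fst hu
  have hunit : IsUnit u := isUnit_iff_isUnit_fst.mpr (.of_mul_eq_one _ hfst)
  exact hunit.mul_left_cancel (by rw [← mul_assoc, hu, one_mul, mul_one])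

section Conjugation

variable {u : DualNumber ℍ}

theorem dstar_mul_inl_coe_add_inr_coe_mul (hu : u * dstar u = 1) (x y : ℝ) :
    dstar u * (inl (x : ℍ) + inr (y : ℍ)) * u = inl (x : ℍ) + inr (y : ℍ) := by
  rw [mul_assoc, (commute_inl_coe_add_inr_coe x y u).eq, ← mul_assoc,
    dstar_mul_eq_one_of_mul_dstar_eq_one hu, one_mul]

theorem dstar_conj (p : DualNumber ℍ) : dstar (dstar u * p * u) = dstar u * dstar p * u := by
  rw [dstar_mul, dstar_mul, dstar_dstar, mul_assoc]

theorem conj_add_dstar_conj (hu : u * dstar u = 1) (p : DualNumber ℍ) :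
    dstar u * p * u + dstar (dstar u * p * u) = p + dstar p := by
  rw [dstar_conj, ← add_mul, ← mul_add, add_dstar p, dstar_mul_inl_coe_add_inr_coe_mul hu]

theorem re_fst_conj (hu : u * dstar u = 1) (p : DualNumber ℍ) :
    (dstar u * p * u).fst.re = p.fst.re := by
  have h := congrArg (fun a => a.fst.re) (conj_add_dstar_conj hu p)
  simp only [fst_add, fst_dstar, Quaternion.re_add, Quaternion.re_star] at h
  linarith

theorem re_snd_conj (hu : u * dstar u = 1) (p : DualNumber ℍ) :
    (dstar u * p * u).snd.re = p.snd.re := by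
  have h := congrArg (fun a => a.snd.re) (conj_add_dstar_conj hu p)
  simp only [snd_add, snd_dstar, Quaternion.re_add, Quaternion.re_star] at h
  linarith

theorem dualIm_conj (hu : u * dstar u = 1) (p : DualNumber ℍ) :
    dualIm (dstar u * p * u) = dstar u * dualIm p * u := by
  rw [dualIm_eq_sub, dualIm_eq_sub, re_fst_conj hu, re_snd_conj hu, mul_sub, sub_mul,
    dstar_mul_inl_coe_add_inr_coe_mul hu]

theorem dstar_conj_mul_conj (hu : u * dstar u = 1) (p : DualNumber ℍ) :
    dstar (dstar u * p * u) * (dstar u * p * u) = dstar p * p := by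
  rw [dstar_conj, show dstar u * dstar p * u * (dstar u * p * u)
      = dstar u * (dstar p * (u * dstar u) * p) * u by simp only [mul_assoc],
    hu, mul_one, dstar_mul_self p, dstar_mul_inl_coe_add_inr_coe_mul hu]

theorem dmagH_conj (hu : u * dstar u = 1) (p : DualNumber ℍ) :
    dmagH (dstar u * p * u) = dmagH p := by
  have hfst : (dstar u * p * u).fst = star u.fst * p.fst * u.fst := by simp [fst_mul]
  have hu₀ : ‖u.fst‖ = 1 := (mul_dstar_eq_one_iff.mp hu).1
  have hnorm : ‖(dstar u * p * u).fst‖ = ‖p.fst‖ := by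
    rw [hfst, norm_mul, norm_mul, Quaternion.norm_star, hu₀, one_mul, mul_one]
  by_cases hp : p.fst = 0
  · have ha : (dstar u * p * u).fst = 0 := by rw [hfst, hp, mul_zero, zero_mul]
    have hsnd : (dstar u * p * u).snd = star u.fst * p.snd * u.fst := by
      simp [snd_mul, hp, MulOpposite.smul_eq_mul_unop]
    simp only [dmagH, ha, hp, ne_eq, not_true_eq_false, if_false, hsnd, norm_mul,
      Quaternion.norm_star, hu₀, one_mul, mul_one]
  · have ha : (dstar u * p * u).fst ≠ 0 := by
      rwa [← norm_ne_zero_iff, hnorm, norm_ne_zero_iff]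
    simp only [dmagH, ne_eq, ha, hp, not_false_eq_true, if_true, hnorm,
      ← snd_dstar_mul_self, dstar_conj_mul_conj hu]

end Conjugation

theorem inl_mul_dstar_inl {u₀ : ℍ} (hu₀ : ‖u₀‖ = 1) : inl u₀ * dstar (inl u₀) = 1 :=
  mul_dstar_eq_one_iff.mpr ⟨hu₀, by simp⟩

theorem one_add_inr_mul_dstar {h : ℍ} (hh : h.re = 0) : (1 + inr h) * dstar (1 + inr h) = 1 :=
  mul_dstar_eq_one_iff.mpr ⟨by simp, by simp [Quaternion.star_eq_neg.mpr hh]⟩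

theorem mul_mul_dstar_mul {u v : DualNumber ℍ} (hu : u * dstar u = 1) (hv : v * dstar v = 1) :
    u * v * dstar (u * v) = 1 := by
  rw [dstar_mul, mul_assoc, ← mul_assoc v, hv, one_mul, hu]

theorem conj_mul_eq_conj_conj (u v p : DualNumber ℍ) :
    dstar (u * v) * p * (u * v) = dstar v * (dstar u * p * u) * v := by
  simp only [dstar_mul, mul_assoc]

theorem conj_inl (u₀ : ℍ) (p : DualNumber ℍ) :
    dstar (inl u₀) * p * inl u₀ = inl (star u₀ * p.fst * u₀) + inr (star u₀ * p.snd * u₀) := by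
  ext : 1 <;> simp [fst_mul, snd_mul, mul_assoc]

theorem conj_one_add_inr (h : ℍ) (p : DualNumber ℍ) :
    dstar (1 + inr h) * p * (1 + inr h)
      = inl p.fst + inr (p.snd + star h * p.fst + p.fst * h) := by
  ext : 1 <;> simp [fst_mul, snd_mul, MulOpposite.smul_eq_mul_unop, add_comm]

def IsDualComplex (a : DualNumber ℍ) : Prop :=
  a.fst.imJ = 0 ∧ a.fst.imK = 0 ∧ a.snd.imJ = 0 ∧ a.snd.imK = 0

theorem exists_re_eq_zero_imJ_eq_zero_imK_eq_zero {z : ℂ} (hz : z.im ≠ 0) (c : ℍ) :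
    ∃ h : ℍ, h.re = 0 ∧ (c + star h * z + z * h).imJ = 0 ∧ (c + star h * z + z * h).imK = 0 := by
  -- `h ↦ z h - h z` kills `1`, `i` and acts on the `j`,`k` plane as left multiplication by `2 z.im i`
  refine ⟨(2 * z.im)⁻¹ • ((Complex.I : ℍ) * c).im, by simp, ?_, ?_⟩ <;>
  · simp
    field_simp
    ring

theorem exists_conj_isDualComplex_of_fst_eq_coeComplex {p : DualNumber ℍ} {z : ℂ}
    (hz : z.im ≠ 0) (hp : p.fst = z) :
    ∃ v : DualNumber ℍ, v * dstar v = 1 ∧ IsDualComplex (dstar v * p * v) := by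
  obtain ⟨h, hre, hJ, hK⟩ := exists_re_eq_zero_imJ_eq_zero_imK_eq_zero hz p.snd
  refine ⟨1 + inr h, one_add_inr_mul_dstar hre, ?_⟩
  rw [conj_one_add_inr, hp]
  exact ⟨by simp, by simp, by simpa using hJ, by simpa using hK⟩

theorem exists_conj_isDualComplex (q : DualNumber ℍ) :
    ∃ u : DualNumber ℍ, u * dstar u = 1 ∧ IsDualComplex (dstar u * q * u) := by
  by_cases hq : q.fst.im = 0
  · obtain ⟨u₀, hu₀, h⟩ := Quaternion.exists_norm_eq_one_star_mul_mul_eq_coeComplex q.snd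
    have hreal : q.fst = (q.fst.re : ℍ) := by
      rw [← q.fst.re_add_im, hq, add_zero, Quaternion.re_coe]
    refine ⟨inl u₀, inl_mul_dstar_inl hu₀, ?_⟩
    rw [conj_inl, h, hreal, Quaternion.star_mul_coe_mul_of_norm_eq_one hu₀]
    simp [IsDualComplex]
  · obtain ⟨u₀, hu₀, h⟩ := Quaternion.exists_norm_eq_one_star_mul_mul_eq_coeComplex q.fst
    obtain ⟨v, hv, hcx⟩ := exists_conj_isDualComplex_of_fst_eq_coeComplex
      (p := dstar (inl u₀) * q * inl u₀) (z := ⟨q.fst.re, ‖q.fst.im‖⟩)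
      (by simpa using hq) (by simpa [conj_inl] using h)
    refine ⟨inl u₀ * v, mul_mul_dstar_mul (inl_mul_dstar_inl hu₀) hv, ?_⟩
    rwa [conj_mul_eq_conj_conj]

/-- Every dual quaternion `q` is similar, via a unit dual quaternion `u`, to a dual complex
number `a = u* q u` (both parts of `a` lie in `span{1, i}`); moreover `Re(q) = Re(a)`
componentwise and `|Im(q)| = |Im(a)|` as dual numbers. -/
theorem dual_quaternion_similar_dual_complex (q : DualNumber ℍ) :
    ∃ u a : DualNumber ℍ,
      (‖u.fst‖ = 1 ∧ u.fst * star u.snd + u.snd * star u.fst = 0) ∧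
      (a.fst.imJ = 0 ∧ a.fst.imK = 0 ∧ a.snd.imJ = 0 ∧ a.snd.imK = 0) ∧
      a = dstar u * q * u ∧
      a.fst.re = q.fst.re ∧ a.snd.re = q.snd.re ∧
      dmagH (dualIm q) = dmagH (dualIm a) := by
  obtain ⟨u, hu, hcx⟩ := exists_conj_isDualComplex q
  refine ⟨u, _, mul_dstar_eq_one_iff.mp hu, hcx, rfl, re_fst_conj hu q, re_snd_conj hu q, ?_⟩
  rw [dualIm_conj hu, dmagH_conj hu]
end
end

section
/- For dual elements q₁, q₂: |q₁ q₂| = |q₁| · |q₂|, where magnitudes are nonnegative dual numbers. -/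
/-! The dual part of `|p|` is `⟪p_s, p_d⟫ / ‖p_s‖`, the derivative of the norm at `p_s` in the
direction `p_d`. The multiplicativity of the dual part is then the product rule for
`⟪p, q⟫ = re (p * star q)`, using that left and right multiplication by a quaternion `a` scale
this inner product by `‖a‖²`. -/

open TrivSqZeroExt

noncomputable section
open Classical

local notation "ℍ" => Quaternion ℝ

open scoped RealInnerProductSpace

theorem Quaternion.re_star_mul_add_star_mul (p d : ℍ) :
    (star p * d + star d * p).re = 2 * ⟪p, d⟫ := by
  simp only [inner_def, re_add, re_mul, re_star, imI_star, imJ_star, imK_star]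
  ring

theorem Quaternion.inner_mul_mul_left (a q t : ℍ) : ⟪a * q, a * t⟫ = ‖a‖ ^ 2 * ⟪q, t⟫ := by
  rw [sq, ← normSq_eq_norm_mul_self]
  simp only [inner_def, star_mul, normSq_def', re_mul, imI_mul, imJ_mul, imK_mul, re_star,
    imI_star, imJ_star, imK_star]
  ring

theorem Quaternion.inner_mul_mul_right (p s a : ℍ) : ⟪p * a, s * a⟫ = ‖a‖ ^ 2 * ⟪p, s⟫ := by
  rw [inner_def, star_mul, ← mul_assoc, mul_assoc p, self_mul_star, ← coe_commutes, mul_assoc,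
    coe_mul_eq_smul, re_smul, ← inner_def, normSq_eq_norm_mul_self, sq, smul_eq_mul]

theorem fst_dmagH (p : DualNumber ℍ) : (dmagH p).fst = ‖p.fst‖ := by
  by_cases h : p.fst = 0 <;> simp [dmagH, h]

theorem snd_dmagH_of_fst_ne_zero {p : DualNumber ℍ} (h : p.fst ≠ 0) :
    (dmagH p).snd = ⟪p.fst, p.snd⟫ / ‖p.fst‖ := by
  have hn : ‖p.fst‖ ≠ 0 := norm_ne_zero_iff.mpr h
  simp only [dmagH, h, ne_eq, not_false_eq_true, if_true, snd_add, snd_inl, snd_inr, zero_add,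
    Quaternion.re_star_mul_add_star_mul]
  field_simp

theorem snd_dmagH_of_fst_eq_zero {p : DualNumber ℍ} (h : p.fst = 0) :
    (dmagH p).snd = ‖p.snd‖ := by
  simp [dmagH, h]

/-- For dual quaternions `q₁, q₂`: `|q₁ q₂| = |q₁| |q₂|` as dual numbers. -/
theorem dual_mag_mul (q₁ q₂ : DualNumber ℍ) :
    dmagH (q₁ * q₂) = dmagH q₁ * dmagH q₂ := by
  refine ext (by simp [fst_dmagH]) ?_
  simp only [snd_mul, fst_dmagH, smul_eq_mul, op_smul_eq_mul]
  have hfst : (q₁ * q₂).fst = q₁.fst * q₂.fst := fst_mul _ _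
  have hsnd : (q₁ * q₂).snd = q₁.fst * q₂.snd + q₁.snd * q₂.fst := by
    simp [snd_mul, add_comm]
  by_cases h₁ : q₁.fst = 0 <;> by_cases h₂ : q₂.fst = 0
  · simp [snd_dmagH_of_fst_eq_zero, hfst, hsnd, h₁, h₂]
  · simp [snd_dmagH_of_fst_eq_zero, hfst, hsnd, h₁, norm_mul]
  · simp [snd_dmagH_of_fst_eq_zero, hfst, hsnd, h₂, norm_mul]
  · have hn₁ : ‖q₁.fst‖ ≠ 0 := norm_ne_zero_iff.mpr h₁
    have hn₂ : ‖q₂.fst‖ ≠ 0 := norm_ne_zero_iff.mpr h₂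
    rw [snd_dmagH_of_fst_ne_zero h₁, snd_dmagH_of_fst_ne_zero h₂,
      snd_dmagH_of_fst_ne_zero (hfst ▸ mul_ne_zero h₁ h₂), hfst, hsnd, inner_add_right,
      Quaternion.inner_mul_mul_left, Quaternion.inner_mul_mul_right, norm_mul]
    field_simp
end
end

section
/- For a unit dual complex number a = e^{iθ} and a positive integer n, the n-th roots of a are exactly the dual complex numbers z = e^{i(θ + 2πj)/n} for j = 0, 1, …, n−1; i.e., z^n = a if and only if z is of this form. -/
/-! `dcexp` turns addition of dual angles into multiplication, so each candidate is an `n`-th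
root because `n` times its angle is `θ + 2πj`. Conversely, the real part of a root `z` is a
complex `n`-th root of `e^{iθ_s}`, which singles out `j`; and since the `ε`-part of `x ^ n` is
`n x_s^{n-1} x_d`, a dual number with nonzero real part is determined by its real part and its
`n`-th power. -/

open TrivSqZeroExt

noncomputable section

/-- The dual exponential `e^{iθ}` of a dual angle `θ = θ_s + θ_d ε`:
`e^{iθ} = e^{iθ_s} + i θ_d e^{iθ_s} ε`. -/
def dcexp (θ : DualNumber ℝ) : DualNumber ℂ :=
  inl (Complex.exp (Complex.I * (θ.fst : ℂ))) +
    inr (Complex.I * (θ.snd : ℂ) * Complex.exp (Complex.I * (θ.fst : ℂ)))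

theorem Complex.exists_eq_exp_of_pow_eq_exp_mul_I {n : ℕ} (hn : n ≠ 0) {w : ℂ} {t : ℝ}
    (h : w ^ n = exp (I * t)) : ∃ j < n, w = exp (I * ↑((t + 2 * Real.pi * j) / n)) := by
  have : NeZero n := ⟨hn⟩
  set v := exp (I * ↑(t / n))
  have hv : v ^ n = exp (I * t) := by
    rw [← exp_nat_mul]
    congr 1
    push_cast
    field_simp
  have hunit : (w / v) ^ n = 1 := by rw [div_pow, h, hv, div_self (exp_ne_zero _)]
  obtain ⟨j, hj, hroot⟩ := (isPrimitiveRoot_exp n hn).eq_pow_of_pow_eq_one hunit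
  refine ⟨j, hj, ?_⟩
  rw [← div_mul_cancel₀ w (exp_ne_zero (I * ↑(t / n))), ← hroot, ← exp_nat_mul,
    ← exp_add]
  congr 1
  push_cast
  field_simp
  ring

theorem DualNumber.eq_of_pow_eq_pow {R : Type*} [CommRing R] [IsDomain R] [CharZero R] {n : ℕ}
    (hn : n ≠ 0) {x y : DualNumber R} (hfst : x.fst = y.fst) (hx : x.fst ≠ 0)
    (h : x ^ n = y ^ n) : x = y := by
  refine TrivSqZeroExt.ext hfst ?_
  have hsnd := congrArg snd h
  rw [snd_pow, snd_pow, hfst, smul_eq_mul, smul_eq_mul] at hsnd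
  exact mul_left_cancel₀ (pow_ne_zero _ (hfst ▸ hx)) (nsmul_right_injective hn hsnd)

@[simp]
theorem fst_dcexp (θ : DualNumber ℝ) : (dcexp θ).fst = Complex.exp (Complex.I * θ.fst) := by
  simp [dcexp]

theorem dcexp_add (θ φ : DualNumber ℝ) : dcexp (θ + φ) = dcexp θ * dcexp φ := by
  ext <;> simp [dcexp, mul_add, Complex.exp_add]; ring

theorem dcexp_nsmul (n : ℕ) (θ : DualNumber ℝ) : dcexp (n • θ) = dcexp θ ^ n := by
  induction n with
  | zero => ext <;> simp [dcexp]
  | succ n ih => rw [succ_nsmul, dcexp_add, ih, pow_succ]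

theorem dcexp_inl_two_pi_mul_natCast (j : ℕ) : dcexp (inl (2 * Real.pi * j)) = 1 := by
  ext
  · rw [fst_dcexp, fst_inl, fst_one, ← Complex.exp_nat_mul_two_pi_mul_I j]
    congr 1
    push_cast
    ring
  · simp [dcexp]

/-- For a unit dual complex number `a = e^{iθ}` and a positive integer `n`, the `n`-th
roots of `a` are exactly `z = e^{i(θ + 2πj)/n}` for `j = 0, 1, …, n-1`. -/
theorem dual_complex_nth_roots (n : ℕ) (hn : 0 < n) (θ : DualNumber ℝ)
    (z : DualNumber ℂ) :
    z ^ n = dcexp θ ↔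
      ∃ j : ℕ, j < n ∧
        z = dcexp (inl ((θ.fst + 2 * Real.pi * j) / n) + inr (θ.snd / n)) := by
  have hroot (j : ℕ) :
      dcexp (inl ((θ.fst + 2 * Real.pi * j) / n) + inr (θ.snd / n)) ^ n = dcexp θ := by
    have hmul : n • (inl ((θ.fst + 2 * Real.pi * j) / n) + inr (θ.snd / n))
        = inl (2 * Real.pi * j) + θ := by
      ext <;> simp [add_comm, mul_div_cancel₀, hn.ne']
    rw [← dcexp_nsmul, hmul, dcexp_add, dcexp_inl_two_pi_mul_natCast, one_mul]
  refine ⟨fun h => ?_, fun ⟨j, _, hz⟩ => hz ▸ hroot j⟩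
  have hfst : z.fst ^ n = Complex.exp (Complex.I * θ.fst) := by
    rw [← fst_pow, h, fst_dcexp]
  obtain ⟨j, hj, hzj⟩ := Complex.exists_eq_exp_of_pow_eq_exp_mul_I hn.ne' hfst
  refine ⟨j, hj, DualNumber.eq_of_pow_eq_pow hn.ne' ?_ ?_ (h.trans (hroot j).symm)⟩
  · simpa using hzj
  · exact hzj ▸ Complex.exp_ne_zero _
end
end
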